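/- For any integer d ≥ 3, the ideal I_d = ⟨x^d, x^{d-1}y, y^d⟩ ⊂ K[x,y] is Ratliff-Rush, and moreover all powers I_d^l are Ratliff-Rush. -/

import Mathlib

/-- The Ratliff-Rush closure of an ideal, as a set: `∪_{m≥1} (I^{m+1} : I^m)`. -/
def ratliffRushClosure {R : Type*} [CommRing R] (I : Ideal R) : Set R :=
  {x | ∃ m : ℕ, 1 ≤ m ∧ x ∈ (I ^ (m + 1)).colon ((I ^ m : Ideal R) : Set R)}

/-- An ideal is Ratliff-Rush if it equals its Ratliff-Rush closure. -/
def IsRatliffRush {R : Type*} [CommRing R] (I : Ideal R) : Prop :=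
  (I : Set R) = ratliffRushClosure I

namespace HeinzerAux

open MvPolynomial

/-- Exponent vector (A, B) in `Fin 2 →₀ ℕ`. -/
noncomputable def expv (A B : ℕ) : Fin 2 →₀ ℕ := Finsupp.single 0 A + Finsupp.single 1 B

lemma expv_apply_zero (A B : ℕ) : expv A B 0 = A := by
  simp [expv, Finsupp.single_apply]

lemma expv_apply_one (A B : ℕ) : expv A B 1 = B := by
  simp [expv, Finsupp.single_apply]

lemma expv_add (A B A' B' : ℕ) : expv A B + expv A' B' = expv (A + A') (B + B') := by
  simp only [expv, Finsupp.single_add]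
  abel

lemma monomial_expv {K : Type*} [CommSemiring K] (A B : ℕ) :
    (monomial (expv A B) (1 : K)) = X 0 ^ A * X 1 ^ B := by
  simp [expv, X_pow_eq_monomial, monomial_mul]

/-- The set of exponents of the natural generators of `I^n`. -/
def Eset (d n : ℕ) : Set (Fin 2 →₀ ℕ) :=
  {c | ∃ i j k : ℕ, i + j + k = n ∧ c = expv (d * i + (d - 1) * j) (j + d * k)}

variable {K : Type*} [Field K] (d : ℕ)

/-- The Heinzer ideal. -/
noncomputable def Isp (d : ℕ) : Ideal (MvPolynomial (Fin 2) K) :=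
  Ideal.span {(X 0 : MvPolynomial (Fin 2) K) ^ d, X 0 ^ (d - 1) * X 1,
    (X 1 : MvPolynomial (Fin 2) K) ^ d}

lemma Isp_le : (Isp d : Ideal (MvPolynomial (Fin 2) K)) ≤
    Ideal.span ((fun s => monomial s (1 : K)) '' Eset d 1) := by
  rw [Isp, Ideal.span_le]
  rintro z hz
  simp only [Set.mem_insert_iff, Set.mem_singleton_iff] at hz
  rcases hz with rfl | rfl | rfl
  · exact Ideal.subset_span ⟨expv (d * 1 + (d - 1) * 0) (0 + d * 0),
      ⟨1, 0, 0, by omega, rfl⟩, by simp only [monomial_expv]; ring⟩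
  · exact Ideal.subset_span ⟨expv (d * 0 + (d - 1) * 1) (1 + d * 0),
      ⟨0, 1, 0, by omega, rfl⟩, by simp only [monomial_expv]; ring⟩
  · exact Ideal.subset_span ⟨expv (d * 0 + (d - 1) * 0) (0 + d * 1),
      ⟨0, 0, 1, by omega, rfl⟩, by simp only [monomial_expv]; ring⟩

lemma lower (n : ℕ) :
    Ideal.span ((fun s => monomial s (1 : K)) '' Eset d n) ≤
      (Isp d : Ideal (MvPolynomial (Fin 2) K)) ^ n := by
  rw [Ideal.span_le]
  rintro z ⟨c, ⟨i, j, k, hsum, rfl⟩, rfl⟩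
  have hx : (X 0 : MvPolynomial (Fin 2) K) ^ d ∈ Isp d := Ideal.subset_span (by simp)
  have hy : (X 0 : MvPolynomial (Fin 2) K) ^ (d - 1) * X 1 ∈ Isp d := Ideal.subset_span (by simp)
  have hz : (X 1 : MvPolynomial (Fin 2) K) ^ d ∈ Isp d := Ideal.subset_span (by simp)
  have pe : (monomial (expv (d * i + (d - 1) * j) (j + d * k)) (1 : K)) =
      ((X 0 ^ d) ^ i * (X 0 ^ (d - 1) * X 1) ^ j) * (X 1 ^ d) ^ k := by
    rw [monomial_expv]; ring
  simp only [SetLike.mem_coe]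
  rw [pe, ← hsum, pow_add, pow_add]
  exact Ideal.mul_mem_mul (Ideal.mul_mem_mul (Ideal.pow_mem_pow hx i)
    (Ideal.pow_mem_pow hy j)) (Ideal.pow_mem_pow hz k)

lemma upper (n : ℕ) :
    ((Isp d : Ideal (MvPolynomial (Fin 2) K)) ^ n) ≤
      Ideal.span ((fun s => monomial s (1 : K)) '' Eset d n) := by
  induction n with
  | zero =>
    rw [pow_zero, Ideal.one_eq_top, top_le_iff, Ideal.eq_top_iff_one]
    exact Ideal.subset_span ⟨expv (d * 0 + (d - 1) * 0) (0 + d * 0),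
      ⟨0, 0, 0, by omega, rfl⟩, by simp [monomial_expv]⟩
  | succ n ih =>
    rw [pow_succ]
    calc (Isp d : Ideal (MvPolynomial (Fin 2) K)) ^ n * Isp d
        ≤ Ideal.span ((fun s => monomial s (1 : K)) '' Eset d n) *
          Ideal.span ((fun s => monomial s (1 : K)) '' Eset d 1) :=
          Ideal.mul_mono ih (Isp_le d)
      _ ≤ Ideal.span ((fun s => monomial s (1 : K)) '' Eset d (n + 1)) := by
          rw [Ideal.span_mul_span', Ideal.span_le]
          rintro z hz
          rw [Set.mem_mul] at hz
          obtain ⟨x, hx, y, hy, rfl⟩ := hz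
          obtain ⟨c1, ⟨i1, j1, k1, hs1, rfl⟩, rfl⟩ := hx
          obtain ⟨c2, ⟨i2, j2, k2, hs2, rfl⟩, rfl⟩ := hy
          apply Ideal.subset_span
          refine ⟨expv (d * (i1 + i2) + (d - 1) * (j1 + j2)) ((j1 + j2) + d * (k1 + k2)),
            ⟨i1 + i2, j1 + j2, k1 + k2, by omega, rfl⟩, ?_⟩
          simp only [monomial_expv]
          ring

lemma pow_eq (n : ℕ) :
    ((Isp d : Ideal (MvPolynomial (Fin 2) K)) ^ n) =
      Ideal.span ((fun s => monomial s (1 : K)) '' Eset d n) :=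
  le_antisymm (upper d n) (lower d n)

/-- The combinatorial core. -/
lemma comb (N l a b : ℕ) (hd : 1 ≤ d) (hN : 1 ≤ N) (hl : 1 ≤ l)
    (i1 j1 k1 : ℕ) (hs1 : i1 + j1 + k1 = N + l)
    (hx1 : d * i1 + (d - 1) * j1 ≤ a + d * N) (hy1 : j1 + d * k1 ≤ b)
    (i2 j2 k2 : ℕ) (hs2 : i2 + j2 + k2 = N + l)
    (hx2 : d * i2 + (d - 1) * j2 ≤ a) (hy2 : j2 + d * k2 ≤ b + d * N) :
    ∃ i j k : ℕ, i + j + k = l ∧ d * i + (d - 1) * j ≤ a ∧ j + d * k ≤ b := by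
  by_cases hc1 : N ≤ i1
  · refine ⟨i1 - N, j1, k1, by omega, ?_, hy1⟩
    have h : d * (i1 - N) + d * N = d * i1 := by
      rw [← Nat.mul_add, Nat.sub_add_cancel hc1]
    linarith [h, hx1]
  · -- i1 < N, so j1 + k1 ≥ l + 1, hence b ≥ l + 1
    have hjk : l + 1 ≤ j1 + k1 := by omega
    have hk1 : k1 ≤ d * k1 := Nat.le_mul_of_pos_left _ (by omega)
    have hb : l + 1 ≤ b := by
      calc l + 1 ≤ j1 + k1 := hjk
        _ ≤ j1 + d * k1 := by omega
        _ ≤ b := hy1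
    by_cases hc2 : N ≤ k2
    · refine ⟨i2, j2, k2 - N, by omega, hx2, ?_⟩
      have h : d * (k2 - N) + d * N = d * k2 := by
        rw [← Nat.mul_add, Nat.sub_add_cancel hc2]
      linarith [h, hy2]
    · -- k2 < N, so i2 + j2 ≥ l + 1
      by_cases hc3 : l ≤ i2
      · refine ⟨l, 0, 0, by omega, ?_, by omega⟩
        calc d * l + (d - 1) * 0 = d * l := by ring
          _ ≤ d * i2 := Nat.mul_le_mul_left d hc3
          _ ≤ d * i2 + (d - 1) * j2 := Nat.le_add_right _ _
          _ ≤ a := hx2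
      · refine ⟨i2, l - i2, 0, by omega, ?_, by omega⟩
        have hj : l - i2 ≤ j2 := by omega
        calc d * i2 + (d - 1) * (l - i2) ≤ d * i2 + (d - 1) * j2 :=
            Nat.add_le_add_left (Nat.mul_le_mul_left _ hj) _
          _ ≤ a := hx2

/-- The key colon containment: `I^(N+l) : I^N ⊆ I^l`. -/
lemma key (hd : 3 ≤ d) {l N : ℕ} (hl : 1 ≤ l) (hN : 1 ≤ N)
    {p : MvPolynomial (Fin 2) K}
    (hp : ∀ q ∈ (Isp d : Ideal (MvPolynomial (Fin 2) K)) ^ N, p * q ∈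
      (Isp d : Ideal (MvPolynomial (Fin 2) K)) ^ (N + l)) :
    p ∈ (Isp d : Ideal (MvPolynomial (Fin 2) K)) ^ l := by
  rw [pow_eq, mem_ideal_span_monomial_image]
  intro t ht
  -- the two test monomials x^(dN) and y^(dN)
  have hq1 : (monomial (expv (d * N) 0) (1 : K)) ∈ (Isp d : Ideal (MvPolynomial (Fin 2) K)) ^ N := by
    apply lower d N
    refine Ideal.subset_span ⟨expv (d * N + (d - 1) * 0) (0 + d * 0), ⟨N, 0, 0, by omega, rfl⟩, ?_⟩
    simp only [monomial_expv]; ring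
  have hq2 : (monomial (expv 0 (d * N)) (1 : K)) ∈ (Isp d : Ideal (MvPolynomial (Fin 2) K)) ^ N := by
    apply lower d N
    refine Ideal.subset_span ⟨expv (d * 0 + (d - 1) * 0) (0 + d * N), ⟨0, 0, N, by omega, rfl⟩, ?_⟩
    simp only [monomial_expv]; ring
  have h1 := hp _ hq1
  have h2 := hp _ hq2
  rw [pow_eq, mem_ideal_span_monomial_image] at h1 h2
  have hsup1 : t + expv (d * N) 0 ∈ (p * monomial (expv (d * N) 0) (1 : K)).support := by
    rw [mem_support_iff, coeff_mul_monomial, mul_one]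
    exact mem_support_iff.mp ht
  have hsup2 : t + expv 0 (d * N) ∈ (p * monomial (expv 0 (d * N)) (1 : K)).support := by
    rw [mem_support_iff, coeff_mul_monomial, mul_one]
    exact mem_support_iff.mp ht
  obtain ⟨e1, ⟨i1, j1, k1, hs1, rfl⟩, hle1⟩ := h1 _ hsup1
  obtain ⟨e2, ⟨i2, j2, k2, hs2, rfl⟩, hle2⟩ := h2 _ hsup2
  have hx1 : d * i1 + (d - 1) * j1 ≤ t 0 + d * N := by
    have := Finsupp.le_def.mp hle1 0
    simpa [expv_apply_zero, Finsupp.add_apply] using this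
  have hy1 : j1 + d * k1 ≤ t 1 := by
    have := Finsupp.le_def.mp hle1 1
    simpa [expv_apply_one, Finsupp.add_apply, expv_apply_zero] using this
  have hx2 : d * i2 + (d - 1) * j2 ≤ t 0 := by
    have := Finsupp.le_def.mp hle2 0
    simpa [expv_apply_zero, Finsupp.add_apply, expv_apply_one] using this
  have hy2 : j2 + d * k2 ≤ t 1 + d * N := by
    have := Finsupp.le_def.mp hle2 1
    simpa [expv_apply_one, Finsupp.add_apply] using this
  obtain ⟨i, j, k, hs, hxa, hyb⟩ := comb d N l (t 0) (t 1) (by omega) hN hl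
    i1 j1 k1 hs1 hx1 hy1 i2 j2 k2 hs2 hx2 hy2
  refine ⟨expv (d * i + (d - 1) * j) (j + d * k), ⟨i, j, k, hs, rfl⟩, ?_⟩
  rw [Finsupp.le_def]
  intro x
  fin_cases x
  · simpa [expv_apply_zero] using hxa
  · simpa [expv_apply_one] using hyb

end HeinzerAux

theorem heinzer_conjecture_ideal_ratliffRush (K : Type*) [Field K] (d : ℕ) (hd : 3 ≤ d) :
    IsRatliffRush (Ideal.span {(MvPolynomial.X 0 : MvPolynomial (Fin 2) K) ^ d,
      MvPolynomial.X 0 ^ (d - 1) * MvPolynomial.X 1,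
      (MvPolynomial.X 1 : MvPolynomial (Fin 2) K) ^ d}) ∧
    ∀ l : ℕ, 1 ≤ l →
      IsRatliffRush ((Ideal.span {(MvPolynomial.X 0 : MvPolynomial (Fin 2) K) ^ d,
        MvPolynomial.X 0 ^ (d - 1) * MvPolynomial.X 1,
        (MvPolynomial.X 1 : MvPolynomial (Fin 2) K) ^ d}) ^ l) := by
  have main : ∀ l : ℕ, 1 ≤ l → IsRatliffRush ((HeinzerAux.Isp d : Ideal (MvPolynomial (Fin 2) K)) ^ l) := by
    intro l hl
    unfold IsRatliffRush ratliffRushClosure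
    apply Set.Subset.antisymm
    · intro x hx
      refine ⟨1, le_rfl, ?_⟩
      rw [Submodule.mem_colon]
      intro q hq
      rw [pow_one] at hq
      rw [smul_eq_mul, sq]
      exact Ideal.mul_mem_mul hx hq
    · rintro x ⟨m, hm, hx⟩
      have hN : 1 ≤ l * m := Nat.one_le_iff_ne_zero.mpr (by positivity)
      have e1 : ((HeinzerAux.Isp d : Ideal (MvPolynomial (Fin 2) K)) ^ l) ^ m =
          (HeinzerAux.Isp d : Ideal (MvPolynomial (Fin 2) K)) ^ (l * m) := (pow_mul _ l m).symm
      have e2 : ((HeinzerAux.Isp d : Ideal (MvPolynomial (Fin 2) K)) ^ l) ^ (m + 1) =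
          (HeinzerAux.Isp d : Ideal (MvPolynomial (Fin 2) K)) ^ (l * m + l) := by
        rw [← pow_mul]; ring_nf
      rw [e1, e2] at hx
      have hp : ∀ q ∈ (HeinzerAux.Isp d : Ideal (MvPolynomial (Fin 2) K)) ^ (l * m),
          x * q ∈ (HeinzerAux.Isp d : Ideal (MvPolynomial (Fin 2) K)) ^ (l * m + l) := by
        intro q hq
        have := Submodule.mem_colon.mp hx q hq
        simpa [smul_eq_mul] using this
      exact HeinzerAux.key d hd hl hN hp
  have hIsp : (HeinzerAux.Isp d : Ideal (MvPolynomial (Fin 2) K)) =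
      Ideal.span {(MvPolynomial.X 0 : MvPolynomial (Fin 2) K) ^ d,
        MvPolynomial.X 0 ^ (d - 1) * MvPolynomial.X 1,
        (MvPolynomial.X 1 : MvPolynomial (Fin 2) K) ^ d} := rfl
  constructor
  · have := main 1 le_rfl
    rwa [pow_one, hIsp] at this
  · intro l hl
    have := main l hl
    rwa [hIsp] at this
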